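/- arXiv:2002.11796 — 2 statements merged into one kernel-verified Lean document; each statement's English description precedes it below -/
import Mathlib

section
/- For partitions λ and μ with μ ⊆ λ, the generalized (ninth variation) skew Schur function satisfies the Jacobi–Trudi type identity s_{λ/μ}(X) = det( h_{λ_i − μ_j − i + j}(τ^{μ_j − j + 1} X) )_{1 ≤ i,j ≤ l}, where l = ℓ(λ), h_r(τ^m X) = s_{(r)}(τ^m X) for r ≥ 1, h_0(τ^m X) = 1, and h_r(τ^m X) = 0 for r < 0. -/
/-!
Lindström–Gessel–Viennot. Row `i` of a semistandard filling of `λ/μ`, read by content, is a lattice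
path from `μ_i - i` to `λ_i - i` through the levels `1, …, n`: a box of content `c` and entry `k`
is an east step from `c` on level `k`, of weight `x_{k,c}`. Weak increase along rows makes this a
bijection onto all such paths, and strict increase down columns says exactly that the paths of
consecutive rows are disjoint; so `s_{λ/μ}(X)` is the weighted count of non-intersecting families.
The one-row case identifies `h_{b-a}(τ^a X)` with the weighted count of paths from `a` to `b`, and
the involution swapping the tails of the two lowest-indexed paths through the first meeting point
cancels all intersecting terms of the expanded determinant.
-/

open Finset
open scoped Classical


/-- Boxes of the skew Young diagram of `lam/mu` (0-indexed rows and columns):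
box `(i,j)` with `i < l` and `mu i ≤ j < lam i`. -/
def skewCells (lam mu : ℕ → ℕ) (l : ℕ) : Finset (ℕ × ℕ) :=
  (Finset.range l ×ˢ Finset.range (lam 0)).filter fun p => mu p.1 ≤ p.2 ∧ p.2 < lam p.1

/-- Content of a box `(i,j)` is `j - i`. -/
def content (p : ℕ × ℕ) : ℤ := (p.2 : ℤ) - (p.1 : ℤ)

/-- The ninth variation (generalized) skew Schur function: the sum over semistandard
fillings of the cell set `C` with entries in `Fin n` of the product of the
content-dependent weights `X entry content`. -/
noncomputable def schurGen {R : Type*} [CommRing R] (n : ℕ) (C : Finset (ℕ × ℕ))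
    (X : Fin n → ℤ → R) : R :=
  ∑ T ∈ Finset.univ.filter (fun T : {p // p ∈ C} → Fin n =>
      (∀ p q : {p // p ∈ C}, (q : ℕ × ℕ).1 = (p : ℕ × ℕ).1 ∧
          (q : ℕ × ℕ).2 = (p : ℕ × ℕ).2 + 1 → T p ≤ T q) ∧
      (∀ p q : {p // p ∈ C}, (q : ℕ × ℕ).1 = (p : ℕ × ℕ).1 + 1 ∧
          (q : ℕ × ℕ).2 = (p : ℕ × ℕ).2 → T p < T q)),
    ∏ p : {p // p ∈ C}, X (T p) (content (p : ℕ × ℕ))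

/-- Cells of a single row of `r` boxes, with contents `0, 1, …, r-1`. -/
def rowCells (r : ℕ) : Finset (ℕ × ℕ) := (Finset.range r).image fun j => (0, j)

/-- Cells of a single column of `r` boxes, with contents `0, -1, …, -(r-1)`. -/
def colCells (r : ℕ) : Finset (ℕ × ℕ) := (Finset.range r).image fun i => (i, 0)

/-- `h_r(τ^m X)`: the generalized complete homogeneous function, a one-row
generalized Schur function with leftmost content `m`; it is `1` for `r = 0`
and `0` for `r < 0`. -/
noncomputable def hGen {R : Type*} [CommRing R] (n : ℕ) (r m : ℤ) (X : Fin n → ℤ → R) : R :=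
  if r < 0 then 0 else schurGen n (rowCells r.toNat) fun k c => X k (m + c)

/-- `e_r(τ^m X)`: the generalized elementary function, a one-column generalized
Schur function with topmost content `m`; it is `1` for `r = 0` and `0` for `r < 0`. -/
noncomputable def eGen {R : Type*} [CommRing R] (n : ℕ) (r m : ℤ) (X : Fin n → ℤ → R) : R :=
  if r < 0 then 0 else schurGen n (colCells r.toNat) fun k c => X k (m + c)

namespace JacobiTrudi

noncomputable section

variable {R : Type*} [CommRing R] {n : ℕ}

/-- A lattice path through the levels `0, …, n-1` is encoded by a monotone `g : Fin (n+1) → ℤ`: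
on level `k` it runs east from content `g k` to content `g (k+1)`, so it starts at `g 0` and
ends at `g n`. Its east step from `c` on level `k` carries the weight `X k c`. -/
def latticePaths (n : ℕ) (a b : ℤ) : Finset (Fin (n + 1) → ℤ) :=
  {g ∈ Fintype.piFinset fun _ => Icc a b | Monotone g ∧ g 0 = a ∧ g (Fin.last n) = b}

theorem mem_latticePaths {a b : ℤ} {g : Fin (n + 1) → ℤ} :
    g ∈ latticePaths n a b ↔ Monotone g ∧ g 0 = a ∧ g (Fin.last n) = b := by
  refine ⟨fun h => (mem_filter.1 h).2, fun h => mem_filter.2 ⟨?_, h⟩⟩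
  rw [Fintype.mem_piFinset]
  obtain ⟨hg, rfl, rfl⟩ := h
  exact fun k => mem_Icc.2 ⟨hg (Fin.zero_le k), hg (Fin.le_last k)⟩

def pathWeight (X : Fin n → ℤ → R) (g : Fin (n + 1) → ℤ) : R :=
  ∏ k : Fin n, ∏ c ∈ Ico (g k.castSucc) (g k.succ), X k c

/-- The level on which the path `g` takes its east step from content `c`. -/
def pathLetter (g : Fin (n + 1) → ℤ) (c : ℤ) : ℕ := #{k : Fin n | g k.succ ≤ c}

/-- `X` with letters indexed by `ℕ`; the value `1` beyond `n` is never used. -/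
def letterWeight (X : Fin n → ℤ → R) (k : ℕ) (c : ℤ) : R :=
  if h : k < n then X ⟨k, h⟩ c else 1

@[simp]
theorem letterWeight_val (X : Fin n → ℤ → R) (k : Fin n) (c : ℤ) :
    letterWeight X k c = X k c := by
  simp [letterWeight]

section PathLetter

variable {g : Fin (n + 1) → ℤ} {c : ℤ}

theorem pathLetter_lt_iff (hg : Monotone g) (hc : g 0 ≤ c) (k : Fin (n + 1)) :
    pathLetter g c < k ↔ c < g k := by
  constructor
  · intro hlt
    by_contra! hle
    have hsub : univ.filter (fun j : Fin n => (j : ℕ) < k) ⊆ univ.filter fun j => g j.succ ≤ c := by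
      intro j hj
      simp only [mem_filter, mem_univ, true_and] at hj ⊢
      exact (hg (Fin.le_def.2 (by simpa using hj))).trans hle
    have := card_le_card hsub
    rw [Fin.card_filter_val_lt] at this
    unfold pathLetter at hlt
    omega
  · intro hlt
    have hk : 0 < (k : ℕ) := by
      by_contra! h0
      rw [show k = 0 from Fin.ext (by rw [Fin.val_zero]; omega)] at hlt
      exact hlt.not_ge hc
    have hsub : univ.filter (fun j : Fin n => g j.succ ≤ c) ⊆
        univ.filter fun j => (j : ℕ) < k - 1 := by
      intro j hj
      simp only [mem_filter, mem_univ, true_and] at hj ⊢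
      have : j.succ < k := lt_of_not_ge fun h => (hg h).not_gt (hj.trans_lt hlt)
      rw [Fin.lt_def, Fin.val_succ] at this
      omega
    have := card_le_card hsub
    rw [Fin.card_filter_val_lt] at this
    unfold pathLetter
    omega

theorem pathLetter_lt (hg : Monotone g) (hc : g 0 ≤ c) (hc' : c < g (Fin.last n)) :
    pathLetter g c < n := by
  simpa using (pathLetter_lt_iff hg hc (Fin.last n)).2 hc'

theorem pathLetter_lt_of_mem_latticePaths {a b : ℤ} (hg : g ∈ latticePaths n a b)
    (hc : c ∈ Set.Ico a b) : pathLetter g c < n := by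
  obtain ⟨hmono, h0, hl⟩ := mem_latticePaths.1 hg
  exact pathLetter_lt hmono (h0 ▸ hc.1) (hl ▸ hc.2)

theorem pathLetter_lt_iff_of_mem_latticePaths {a b : ℤ} (hg : g ∈ latticePaths n a b) (hc : a ≤ c)
    (k : Fin (n + 1)) : pathLetter g c < k ↔ c < g k := by
  obtain ⟨hmono, h0, -⟩ := mem_latticePaths.1 hg
  exact pathLetter_lt_iff hmono (h0 ▸ hc) k

theorem pathLetter_eq (hg : Monotone g) {k : Fin n} (h₁ : g k.castSucc ≤ c)
    (h₂ : c < g k.succ) : pathLetter g c = k := by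
  have h0 : g 0 ≤ c := (hg (Fin.zero_le _)).trans h₁
  have hlt := (pathLetter_lt_iff hg h0 k.succ).2 h₂
  have hge := (pathLetter_lt_iff hg h0 k.castSucc).not.2 (not_lt.2 h₁)
  simp only [Fin.val_succ, Fin.val_castSucc] at hlt hge
  omega

theorem pathLetter_mono (g : Fin (n + 1) → ℤ) : Monotone (pathLetter g) :=
  fun _ _ h => card_le_card (monotone_filter_right _ fun _ _ hk => hk.trans h)

end PathLetter

/-- The path whose east step from content `c ∈ [a, b)` lies on level `f c`. -/
def pathOfLetters (n : ℕ) (f : ℤ → ℕ) (a b : ℤ) : Fin (n + 1) → ℤ :=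
  fun k => a + #{c ∈ Ico a b | f c < k}

section PathOfLetters

variable {f : ℤ → ℕ} {a b : ℤ}

theorem lt_pathOfLetters_iff (hf : MonotoneOn f (Set.Ico a b)) {c : ℤ} (hc : c ∈ Set.Ico a b)
    (k : Fin (n + 1)) : c < pathOfLetters n f a b k ↔ f c < k := by
  unfold pathOfLetters
  constructor
  · intro hlt
    by_contra! hle
    have hsub : {x ∈ Ico a b | f x < k} ⊆ Ico a c := by
      intro x hx
      rw [mem_filter, mem_Ico] at hx
      rw [mem_Ico]
      exact ⟨hx.1.1, lt_of_not_ge fun hcx =>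
        (hf hc ⟨hx.1.1, hx.1.2⟩ hcx).not_gt (hx.2.trans_le hle)⟩
    have := card_le_card hsub
    rw [Int.card_Ico] at this
    have := hc.1
    omega
  · intro hlt
    have hsub : Ico a (c + 1) ⊆ {x ∈ Ico a b | f x < k} := by
      intro x hx
      rw [mem_Ico] at hx
      rw [mem_filter, mem_Ico]
      exact ⟨⟨hx.1, by linarith [hc.2]⟩,
        (hf ⟨hx.1, by linarith [hc.2]⟩ hc (by omega)).trans_lt hlt⟩
    have := card_le_card hsub
    rw [Int.card_Ico] at this
    omega

theorem pathOfLetters_mem_latticePaths (hab : a ≤ b) (hf : ∀ c ∈ Set.Ico a b, f c < n) :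
    pathOfLetters n f a b ∈ latticePaths n a b := by
  refine mem_latticePaths.2 ⟨fun k k' hk => ?_, by simp [pathOfLetters], ?_⟩
  · have := card_le_card (monotone_filter_right (Ico a b)
      fun c _ (h : f c < k) => h.trans_le (Fin.le_def.1 hk))
    simp only [pathOfLetters]
    omega
  · rw [pathOfLetters, Fin.val_last,
      filter_true_of_mem fun c hc => hf c (by simpa using hc), Int.card_Ico]
    omega

theorem pathOfLetters_congr {f' : ℤ → ℕ} (h : Set.EqOn f f' (Set.Ico a b)) :
    pathOfLetters n f a b = pathOfLetters n f' a b := by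
  funext k
  simp only [pathOfLetters]
  rw [filter_congr fun c hc => by rw [h (by simpa using hc)]]

theorem pathLetter_pathOfLetters (hab : a ≤ b) (hf : MonotoneOn f (Set.Ico a b))
    (hfn : ∀ c ∈ Set.Ico a b, f c < n) {c : ℤ} (hc : c ∈ Set.Ico a b) :
    pathLetter (pathOfLetters n f a b) c = f c := by
  obtain ⟨hmono, h0, -⟩ := mem_latticePaths.1 (pathOfLetters_mem_latticePaths hab hfn)
  have key (k : Fin (n + 1)) : pathLetter (pathOfLetters n f a b) c < k ↔ f c < k :=
    (pathLetter_lt_iff hmono (by rw [h0]; exact hc.1) k).trans (lt_pathOfLetters_iff hf hc k)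
  have hlt := (key ⟨f c + 1, by have := hfn c hc; omega⟩).2 (Nat.lt_succ_self _)
  have hge := (key ⟨f c, by have := hfn c hc; omega⟩).not.2 (lt_irrefl _)
  simp only at hlt hge
  omega

theorem pathOfLetters_pathLetter {g : Fin (n + 1) → ℤ} (hg : g ∈ latticePaths n a b) :
    pathOfLetters n (pathLetter g) a b = g := by
  obtain ⟨hmono, h0, hl⟩ := mem_latticePaths.1 hg
  funext k
  have hfilter : {c ∈ Ico a b | pathLetter g c < k} = Ico a (g k) := by
    ext c
    simp only [mem_filter, mem_Ico]
    constructor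
    · rintro ⟨⟨hac, -⟩, hc⟩
      exact ⟨hac, (pathLetter_lt_iff hmono (h0 ▸ hac) k).1 hc⟩
    · rintro ⟨hac, hc⟩
      exact ⟨⟨hac, hc.trans_le (hl ▸ hmono (Fin.le_last k))⟩,
        (pathLetter_lt_iff hmono (h0 ▸ hac) k).2 hc⟩
  rw [pathOfLetters, hfilter, Int.card_Ico]
  have := h0 ▸ hmono (Fin.zero_le k)
  omega

end PathOfLetters

theorem pathWeight_eq_prod_letterWeight (X : Fin n → ℤ → R) {g : Fin (n + 1) → ℤ}
    (hg : Monotone g) :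
    pathWeight X g = ∏ c ∈ Ico (g 0) (g (Fin.last n)), letterWeight X (pathLetter g c) c := by
  have hfiber (k : Fin n) :
      {c ∈ Ico (g 0) (g (Fin.last n)) | pathLetter g c = k} = Ico (g k.castSucc) (g k.succ) := by
    ext c
    simp only [mem_filter, mem_Ico]
    constructor
    · rintro ⟨⟨h0, -⟩, hk⟩
      have hlt := (pathLetter_lt_iff hg h0 k.succ).1 (by simp [hk])
      have hge := (pathLetter_lt_iff hg h0 k.castSucc).not.1 (by simp [hk])
      exact ⟨not_lt.1 hge, hlt⟩
    · rintro ⟨h₁, h₂⟩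
      exact ⟨⟨(hg (Fin.zero_le _)).trans h₁, h₂.trans_le (hg (Fin.le_last _))⟩,
        pathLetter_eq hg h₁ h₂⟩
  rw [← prod_fiberwise_of_maps_to (t := range n) (g := pathLetter g) fun c hc =>
      mem_range.2 (pathLetter_lt hg (mem_Ico.1 hc).1 (mem_Ico.1 hc).2),
    ← Fin.prod_univ_eq_prod_range (fun k => ∏ c ∈ Ico (g 0) (g (Fin.last n)) with
      pathLetter g c = k, letterWeight X (pathLetter g c) c)]
  refine prod_congr rfl fun k _ => ?_
  rw [hfiber]
  refine prod_congr rfl fun c hc => ?_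
  rw [pathLetter_eq hg (mem_Ico.1 hc).1 (mem_Ico.1 hc).2, letterWeight_val]

theorem pathWeight_shift (X : Fin n → ℤ → R) (m : ℤ) (g : Fin (n + 1) → ℤ) :
    pathWeight (fun k c => X k (m + c)) g = pathWeight X fun k => m + g k := by
  unfold pathWeight
  refine prod_congr rfl fun k _ => ?_
  rw [prod_Ico_add (X k), add_comm (g _), add_comm (g _)]

theorem sum_pathWeight_shift (X : Fin n → ℤ → R) (m a b : ℤ) :
    ∑ g ∈ latticePaths n a b, pathWeight (fun k c => X k (m + c)) g =
      ∑ g ∈ latticePaths n (m + a) (m + b), pathWeight X g := by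
  refine sum_nbij' (fun g k => m + g k) (fun g k => g k - m) ?_ ?_ ?_ ?_
    fun g _ => pathWeight_shift X m g
  · intro g hg
    obtain ⟨hmono, h0, hl⟩ := mem_latticePaths.1 hg
    exact mem_latticePaths.2 ⟨fun k k' hk => by simpa using hmono hk, by rw [h0], by rw [hl]⟩
  · intro g hg
    obtain ⟨hmono, h0, hl⟩ := mem_latticePaths.1 hg
    exact mem_latticePaths.2 ⟨fun k k' hk => by simpa using hmono hk, by rw [h0]; ring,
      by rw [hl]; ring⟩
  · intro g _
    funext k
    ring
  · intro g _
    funext k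
    ring

theorem prod_Ico_mul_prod_Ico_comm (F : ℤ → R) {a b a' b' c : ℤ} (ha : a ≤ c) (hb : c ≤ b)
    (ha' : a' ≤ c) (hb' : c ≤ b') :
    (∏ x ∈ Ico a b', F x) * ∏ x ∈ Ico a' b, F x =
      (∏ x ∈ Ico a b, F x) * ∏ x ∈ Ico a' b', F x := by
  have split {u v : ℤ} (hu : u ≤ c) (hv : c ≤ v) :
      ∏ x ∈ Ico u v, F x = (∏ x ∈ Ico u c, F x) * ∏ x ∈ Ico c v, F x := by
    rw [← prod_union (Ico_disjoint_Ico_consecutive u c v), Ico_union_Ico_eq_Ico hu hv]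
  rw [split ha hb', split ha' hb, split ha hb, split ha' hb']
  ring

theorem prod_eq_prod_of_pair {ι : Type*} [Fintype ι] {F F' : ι → R} {i j : ι} (hij : i ≠ j)
    (hpair : F i * F j = F' i * F' j) (hrest : ∀ a, a ≠ i → a ≠ j → F a = F' a) :
    ∏ a, F a = ∏ a, F' a := by
  rw [← prod_sdiff (subset_univ {i, j}), ← prod_sdiff (subset_univ {i, j}), prod_pair hij,
    prod_pair hij, hpair]
  congr 1
  refine prod_congr rfl fun a ha => ?_
  simp only [mem_sdiff, mem_univ, mem_insert, mem_singleton, true_and, not_or] at ha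
  exact hrest a ha.1 ha.2

section TailSwap

variable {l : ℕ}

def PassesThrough (G : Fin l → Fin (n + 1) → ℤ) (a : Fin l) (k : Fin n) (c : ℤ) : Prop :=
  G a k.castSucc ≤ c ∧ c ≤ G a k.succ

def IsMeetPoint (G : Fin l → Fin (n + 1) → ℤ) (k : Fin n) (c : ℤ) : Prop :=
  ∃ a b, a ≠ b ∧ PassesThrough G a k c ∧ PassesThrough G b k c

def Intersecting (G : Fin l → Fin (n + 1) → ℤ) : Prop := ∃ k c, IsMeetPoint G k c

variable {G : Fin l → Fin (n + 1) → ℤ}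

def meetLevel (G : Fin l → Fin (n + 1) → ℤ) (hG : Intersecting G) : Fin n :=
  (univ.filter fun k => ∃ c, IsMeetPoint G k c).min'
    (let ⟨k, hk⟩ := hG; ⟨k, mem_filter.2 ⟨mem_univ k, hk⟩⟩)

theorem exists_isMeetPoint_meetLevel (hG : Intersecting G) :
    ∃ c, IsMeetPoint G (meetLevel G hG) c := by
  unfold meetLevel
  exact (mem_filter.1 (min'_mem (univ.filter fun k => ∃ c, IsMeetPoint G k c) _)).2

theorem meetLevel_le (hG : Intersecting G) {k : Fin n} {c : ℤ} (h : IsMeetPoint G k c) :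
    meetLevel G hG ≤ k :=
  min'_le _ _ (mem_filter.2 ⟨mem_univ k, c, h⟩)

def meetPoint (G : Fin l → Fin (n + 1) → ℤ) (hG : Intersecting G) : ℤ :=
  ((univ.biUnion fun a => Icc (G a (meetLevel G hG).castSucc) (G a (meetLevel G hG).succ)).filter
      (IsMeetPoint G (meetLevel G hG))).min'
    (by
      obtain ⟨c, hc⟩ := exists_isMeetPoint_meetLevel hG
      obtain ⟨a, -, -, ha, -⟩ := id hc
      exact ⟨c, mem_filter.2 ⟨mem_biUnion.2 ⟨a, mem_univ a, mem_Icc.2 ⟨ha.1, ha.2⟩⟩, hc⟩⟩)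

theorem isMeetPoint_meetPoint (hG : Intersecting G) :
    IsMeetPoint G (meetLevel G hG) (meetPoint G hG) := by
  unfold meetPoint
  exact (mem_filter.1 (min'_mem _ _)).2

theorem meetPoint_le (hG : Intersecting G) {c : ℤ} (h : IsMeetPoint G (meetLevel G hG) c) :
    meetPoint G hG ≤ c := by
  obtain ⟨a, -, -, ha, -⟩ := id h
  unfold meetPoint
  apply min'_le
  rw [mem_filter]
  exact ⟨mem_biUnion.2 ⟨a, mem_univ a, mem_Icc.2 ⟨ha.1, ha.2⟩⟩, h⟩

def meetPaths (G : Fin l → Fin (n + 1) → ℤ) (hG : Intersecting G) : Finset (Fin l) :=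
  univ.filter fun a => PassesThrough G a (meetLevel G hG) (meetPoint G hG)

theorem mem_meetPaths (hG : Intersecting G) {a : Fin l} :
    a ∈ meetPaths G hG ↔ PassesThrough G a (meetLevel G hG) (meetPoint G hG) := by
  simp [meetPaths]

def firstPath (G : Fin l → Fin (n + 1) → ℤ) (hG : Intersecting G) : Fin l :=
  (meetPaths G hG).min'
    (let ⟨a, _, _, ha, _⟩ := isMeetPoint_meetPoint hG; ⟨a, (mem_meetPaths hG).2 ha⟩)

def secondPath (G : Fin l → Fin (n + 1) → ℤ) (hG : Intersecting G) : Fin l :=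
  ((meetPaths G hG).erase (firstPath G hG)).min' (by
    obtain ⟨a, b, hab, ha, hb⟩ := isMeetPoint_meetPoint hG
    by_cases h : a = firstPath G hG
    · exact ⟨b, mem_erase.2 ⟨h ▸ hab.symm, (mem_meetPaths hG).2 hb⟩⟩
    · exact ⟨a, mem_erase.2 ⟨h, (mem_meetPaths hG).2 ha⟩⟩)

theorem firstPath_mem (hG : Intersecting G) : firstPath G hG ∈ meetPaths G hG :=
  min'_mem _ _

theorem secondPath_mem_erase (hG : Intersecting G) :
    secondPath G hG ∈ (meetPaths G hG).erase (firstPath G hG) :=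
  min'_mem _ _

theorem firstPath_ne_secondPath (hG : Intersecting G) : firstPath G hG ≠ secondPath G hG :=
  (mem_erase.1 (secondPath_mem_erase hG)).1.symm

def meetSwap (G : Fin l → Fin (n + 1) → ℤ) (hG : Intersecting G) : Equiv.Perm (Fin l) :=
  Equiv.swap (firstPath G hG) (secondPath G hG)

theorem passesThrough_of_meetSwap_ne (hG : Intersecting G) {a : Fin l}
    (h : meetSwap G hG a ≠ a) : PassesThrough G a (meetLevel G hG) (meetPoint G hG) := by
  rw [← mem_meetPaths hG]
  by_cases h₁ : a = firstPath G hG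
  · exact h₁ ▸ firstPath_mem hG
  by_cases h₂ : a = secondPath G hG
  · exact h₂ ▸ mem_of_mem_erase (secondPath_mem_erase hG)
  exact absurd (Equiv.swap_apply_of_ne_of_ne h₁ h₂) h

def tailSwap (G : Fin l → Fin (n + 1) → ℤ) (hG : Intersecting G) : Fin l → Fin (n + 1) → ℤ :=
  fun a k => if (k : ℕ) ≤ meetLevel G hG then G a k else G (meetSwap G hG a) k

theorem tailSwap_of_le (hG : Intersecting G) (a : Fin l) {k : Fin (n + 1)}
    (hk : (k : ℕ) ≤ meetLevel G hG) : tailSwap G hG a k = G a k :=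
  if_pos hk

theorem tailSwap_of_lt (hG : Intersecting G) (a : Fin l) {k : Fin (n + 1)}
    (hk : (meetLevel G hG : ℕ) < k) : tailSwap G hG a k = G (meetSwap G hG a) k :=
  if_neg (not_le.2 hk)

theorem tailSwap_of_meetSwap_eq (hG : Intersecting G) {a : Fin l} (h : meetSwap G hG a = a) :
    tailSwap G hG a = G a := by
  funext k
  unfold tailSwap
  split_ifs <;> simp [h]

variable (hG : Intersecting G)

theorem monotone_tailSwap (hmono : ∀ a, Monotone (G a)) (a : Fin l) :
    Monotone (tailSwap G hG a) := by
  intro k k' hkk'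
  have hk : (k : ℕ) ≤ k' := hkk'
  by_cases hσ : meetSwap G hG a = a
  · rw [tailSwap_of_meetSwap_eq hG hσ]
    exact hmono a hkk'
  set K := meetLevel G hG
  rcases le_or_gt (k : ℕ) K with hkK | hkK <;> rcases le_or_gt (k' : ℕ) K with hk'K | hk'K
  · rw [tailSwap_of_le hG a hkK, tailSwap_of_le hG a hk'K]
    exact hmono a hkk'
  · rw [tailSwap_of_le hG a hkK, tailSwap_of_lt hG a hk'K]
    have ha := passesThrough_of_meetSwap_ne hG hσ
    have hσa := passesThrough_of_meetSwap_ne hG (a := meetSwap G hG a)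
      (by rwa [meetSwap, Equiv.swap_apply_self, ne_comm])
    calc G a k ≤ G a K.castSucc := hmono a (Fin.le_def.2 (by simpa using hkK))
      _ ≤ meetPoint G hG := ha.1
      _ ≤ G (meetSwap G hG a) K.succ := hσa.2
      _ ≤ G (meetSwap G hG a) k' := hmono _ (Fin.le_def.2 (by simp; omega))
  · omega
  · rw [tailSwap_of_lt hG a hkK, tailSwap_of_lt hG a hk'K]
    exact hmono _ hkk'

theorem le_meetSwap_succ_iff {a : Fin l} {c : ℤ} (hc : c ≤ meetPoint G hG) :
    c ≤ G (meetSwap G hG a) (meetLevel G hG).succ ↔ c ≤ G a (meetLevel G hG).succ := by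
  by_cases hσ : meetSwap G hG a = a
  · rw [hσ]
  have ha := passesThrough_of_meetSwap_ne hG hσ
  have hσa := passesThrough_of_meetSwap_ne hG (a := meetSwap G hG a)
    (by rwa [meetSwap, Equiv.swap_apply_self, ne_comm])
  exact ⟨fun _ => hc.trans ha.2, fun _ => hc.trans hσa.2⟩

theorem passesThrough_tailSwap_iff {a : Fin l} {k : Fin n} {c : ℤ}
    (hkc : k < meetLevel G hG ∨ k = meetLevel G hG ∧ c ≤ meetPoint G hG) :
    PassesThrough (tailSwap G hG) a k c ↔ PassesThrough G a k c := by
  unfold PassesThrough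
  rw [tailSwap_of_le hG a (k := k.castSucc) (by
    rcases hkc with hk | ⟨rfl, -⟩
    · exact (Fin.val_castSucc k).le.trans (Fin.lt_def.1 hk).le
    · simp)]
  rcases hkc with hk | ⟨rfl, hc⟩
  · rw [tailSwap_of_le hG a (by simpa using Fin.lt_def.1 hk)]
  · rw [tailSwap_of_lt hG a (by simp), le_meetSwap_succ_iff hG hc]

theorem isMeetPoint_tailSwap_iff {k : Fin n} {c : ℤ}
    (hkc : k < meetLevel G hG ∨ k = meetLevel G hG ∧ c ≤ meetPoint G hG) :
    IsMeetPoint (tailSwap G hG) k c ↔ IsMeetPoint G k c := by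
  simp only [IsMeetPoint, passesThrough_tailSwap_iff hG hkc]

theorem intersecting_tailSwap : Intersecting (tailSwap G hG) :=
  ⟨_, _, (isMeetPoint_tailSwap_iff hG (Or.inr ⟨rfl, le_rfl⟩)).2 (isMeetPoint_meetPoint hG)⟩

variable (h' : Intersecting (tailSwap G hG))

theorem meetLevel_tailSwap : meetLevel (tailSwap G hG) h' = meetLevel G hG := by
  refine le_antisymm (meetLevel_le h'
    ((isMeetPoint_tailSwap_iff hG (Or.inr ⟨rfl, le_rfl⟩)).2 (isMeetPoint_meetPoint hG))) ?_
  by_contra! hlt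
  obtain ⟨c, hc⟩ := exists_isMeetPoint_meetLevel h'
  exact (meetLevel_le hG ((isMeetPoint_tailSwap_iff hG (Or.inl hlt)).1 hc)).not_gt hlt

theorem meetPoint_tailSwap : meetPoint (tailSwap G hG) h' = meetPoint G hG := by
  refine le_antisymm (meetPoint_le h' ?_) ?_
  · rw [meetLevel_tailSwap hG h']
    exact (isMeetPoint_tailSwap_iff hG (Or.inr ⟨rfl, le_rfl⟩)).2 (isMeetPoint_meetPoint hG)
  by_contra! hlt
  have hc := isMeetPoint_meetPoint h'
  rw [meetLevel_tailSwap hG h'] at hc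
  exact (meetPoint_le hG ((isMeetPoint_tailSwap_iff hG (Or.inr ⟨rfl, hlt.le⟩)).1 hc)).not_gt hlt

theorem meetSwap_tailSwap : meetSwap (tailSwap G hG) h' = meetSwap G hG := by
  have hpaths : meetPaths (tailSwap G hG) h' = meetPaths G hG := by
    ext a
    rw [mem_meetPaths, mem_meetPaths, meetLevel_tailSwap hG h', meetPoint_tailSwap hG h']
    exact passesThrough_tailSwap_iff hG (Or.inr ⟨rfl, le_rfl⟩)
  have hfirst : firstPath (tailSwap G hG) h' = firstPath G hG := by
    unfold firstPath
    congr 1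
  have hsecond : secondPath (tailSwap G hG) h' = secondPath G hG := by
    unfold secondPath
    congr 1
    rw [hpaths, hfirst]
  rw [meetSwap, meetSwap, hfirst, hsecond]

theorem tailSwap_tailSwap : tailSwap (tailSwap G hG) h' = G := by
  funext a k
  by_cases hk : (k : ℕ) ≤ meetLevel G hG
  · rw [tailSwap_of_le h' a (by rwa [meetLevel_tailSwap hG h']), tailSwap_of_le hG a hk]
  · rw [not_le] at hk
    rw [tailSwap_of_lt h' a (by rwa [meetLevel_tailSwap hG h']), meetSwap_tailSwap hG h',
      tailSwap_of_lt hG _ hk, meetSwap, Equiv.swap_apply_self]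

theorem prod_pathWeight_tailSwap (X : Fin n → ℤ → R) :
    ∏ a, pathWeight X (tailSwap G hG a) = ∏ a, pathWeight X (G a) := by
  have hi := (mem_meetPaths hG).1 (firstPath_mem hG)
  have hj := (mem_meetPaths hG).1 (mem_of_mem_erase (secondPath_mem_erase hG))
  refine prod_eq_prod_of_pair (firstPath_ne_secondPath hG) ?_ fun a hai haj => by
    rw [tailSwap_of_meetSwap_eq hG (Equiv.swap_apply_of_ne_of_ne hai haj)]
  simp only [pathWeight, ← prod_mul_distrib]
  refine prod_congr rfl fun k _ => ?_
  rcases lt_trichotomy k (meetLevel G hG) with hk | rfl | hk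
  · have hk' := Fin.lt_def.1 hk
    rw [tailSwap_of_le hG _ (k := k.castSucc) (by simp; omega),
      tailSwap_of_le hG _ (k := k.castSucc) (by simp; omega),
      tailSwap_of_le hG _ (k := k.succ) (by simp; omega),
      tailSwap_of_le hG _ (k := k.succ) (by simp; omega)]
  · rw [tailSwap_of_le hG _ (k := (meetLevel G hG).castSucc) (by simp),
      tailSwap_of_le hG _ (k := (meetLevel G hG).castSucc) (by simp),
      tailSwap_of_lt hG _ (k := (meetLevel G hG).succ) (by simp),
      tailSwap_of_lt hG _ (k := (meetLevel G hG).succ) (by simp), meetSwap,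
      Equiv.swap_apply_left, Equiv.swap_apply_right]
    exact prod_Ico_mul_prod_Ico_comm _ hi.1 hi.2 hj.1 hj.2
  · have hk' := Fin.lt_def.1 hk
    rw [tailSwap_of_lt hG _ (k := k.castSucc) (by simp; omega),
      tailSwap_of_lt hG _ (k := k.castSucc) (by simp; omega),
      tailSwap_of_lt hG _ (k := k.succ) (by simp; omega),
      tailSwap_of_lt hG _ (k := k.succ) (by simp; omega), meetSwap,
      Equiv.swap_apply_left, Equiv.swap_apply_right, mul_comm]

end TailSwap

/-- The Lindström–Gessel–Viennot cancellation: the sign-reversing involution `tailSwap` pairs off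
the intersecting families. -/
theorem sum_sign_mul_sum_intersecting_eq_zero {l : ℕ} (X : Fin n → ℤ → R) (A B : Fin l → ℤ) :
    ∑ σ : Equiv.Perm (Fin l), ((Equiv.Perm.sign σ : ℤ) : R) *
      ∑ G ∈ Fintype.piFinset (fun i => latticePaths n (A i) (B (σ i))) with Intersecting G,
        ∏ i, pathWeight X (G i) = 0 := by
  simp_rw [mul_sum]
  rw [sum_sigma']
  have hmem {x : Σ _ : Equiv.Perm (Fin l), Fin l → Fin (n + 1) → ℤ} :
      x ∈ univ.sigma (fun σ => {G ∈ Fintype.piFinset (fun i => latticePaths n (A i) (B (σ i))) |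
        Intersecting G}) ↔
        (∀ i, x.2 i ∈ latticePaths n (A i) (B (x.1 i))) ∧ Intersecting x.2 := by
    simp
  refine sum_involution
    (fun x hx => ⟨x.1 * meetSwap x.2 (hmem.1 hx).2, tailSwap x.2 (hmem.1 hx).2⟩) ?_ ?_ ?_ ?_
  · intro x hx
    simp only [Equiv.Perm.sign_mul, meetSwap,
      Equiv.Perm.sign_swap (firstPath_ne_secondPath (hmem.1 hx).2), prod_pathWeight_tailSwap]
    push_cast
    ring
  · intro x hx _ h
    have hσ : x.1 * meetSwap x.2 (hmem.1 hx).2 = x.1 * 1 := by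
      rw [mul_one]
      exact congrArg Sigma.fst h
    exact firstPath_ne_secondPath _ (Equiv.swap_eq_one_iff.1 (mul_left_cancel hσ))
  · intro x hx
    obtain ⟨hpaths, hG⟩ := hmem.1 hx
    have hmono i := (mem_latticePaths.1 (hpaths i)).1
    refine hmem.2 ⟨fun i => mem_latticePaths.2 ⟨monotone_tailSwap hG hmono i, ?_, ?_⟩,
      intersecting_tailSwap hG⟩
    · dsimp only
      rw [tailSwap_of_le hG i (by simp)]
      exact (mem_latticePaths.1 (hpaths i)).2.1
    · dsimp only
      rw [tailSwap_of_lt hG i (by simp)]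
      exact (mem_latticePaths.1 (hpaths _)).2.2
  · intro x hx
    dsimp only
    rw [meetSwap_tailSwap, tailSwap_tailSwap, mul_assoc, meetSwap, Equiv.swap_mul_self, mul_one]

section NonIntersecting

variable {l : ℕ} {G : Fin l → Fin (n + 1) → ℤ} (hmono : ∀ a, Monotone (G a))
  (hG : ¬ Intersecting G)
include hmono hG

theorem succ_lt_castSucc_of_castSucc_lt {a b : Fin l} (hab : a ≠ b) {k : Fin n}
    (h : G b k.castSucc < G a k.castSucc) : G b k.succ < G a k.castSucc := by
  by_contra! hle
  exact hG ⟨k, G a k.castSucc, a, b, hab, ⟨le_rfl, hmono a Fin.castSucc_lt_succ.le⟩, h.le, hle⟩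

theorem strictAnti_of_not_intersecting (h0 : StrictAnti fun a => G a 0) (k : Fin (n + 1)) :
    StrictAnti fun a => G a k := by
  induction k using Fin.induction with
  | zero => exact h0
  | succ k ih =>
    exact fun a b hab => (succ_lt_castSucc_of_castSucc_lt hmono hG hab.ne (ih hab)).trans_le
      (hmono a Fin.castSucc_lt_succ.le)

theorem succ_lt_castSucc_of_not_intersecting (h0 : StrictAnti fun a => G a 0) {a b : Fin l}
    (hab : a < b) (k : Fin n) : G b k.succ < G a k.castSucc :=
  succ_lt_castSucc_of_castSucc_lt hmono hG hab.ne
    (strictAnti_of_not_intersecting hmono hG h0 _ hab)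

end NonIntersecting

theorem eq_one_of_not_intersecting {l : ℕ} {G : Fin l → Fin (n + 1) → ℤ} {A B : Fin l → ℤ}
    (hA : StrictAnti A) (hB : StrictAnti B) {σ : Equiv.Perm (Fin l)}
    (hG : ∀ i, G i ∈ latticePaths n (A i) (B (σ i))) (hnc : ¬ Intersecting G) : σ = 1 := by
  have hmono i := (mem_latticePaths.1 (hG i)).1
  have hlast := strictAnti_of_not_intersecting hmono hnc
    (by simpa only [(mem_latticePaths.1 (hG _)).2.1] using hA) (Fin.last n)
  simp only [(mem_latticePaths.1 (hG _)).2.2] at hlast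
  have hσ : StrictMono σ := fun i j hij => hB.lt_iff_gt.1 (hlast hij)
  exact Equiv.ext fun i => hσ.apply_eq

/-- The Lindström–Gessel–Viennot lemma for these lattice paths. -/
theorem det_sum_pathWeight_eq_sum_nonIntersecting {l : ℕ} (X : Fin n → ℤ → R)
    {A B : Fin l → ℤ} (hA : StrictAnti A) (hB : StrictAnti B) :
    (Matrix.of fun i j => ∑ g ∈ latticePaths n (A j) (B i), pathWeight X g).det =
      ∑ G ∈ Fintype.piFinset (fun i => latticePaths n (A i) (B i)) with ¬ Intersecting G,
        ∏ i, pathWeight X (G i) := by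
  rw [Matrix.det_apply']
  simp only [Matrix.of_apply, prod_univ_sum]
  rw [sum_congr rfl fun σ _ => by rw [← sum_filter_add_sum_filter_not _ Intersecting, mul_add],
    sum_add_distrib, sum_sign_mul_sum_intersecting_eq_zero, zero_add]
  rw [sum_eq_single 1 (fun σ _ hσ => ?_) (by simp)]
  · simp
  · rw [filter_eq_empty_iff.2 fun G hG hnc =>
      hσ (eq_one_of_not_intersecting hA hB (Fintype.mem_piFinset.1 hG) hnc), sum_empty, mul_zero]

theorem not_intersecting_of_succ_lt_castSucc {l : ℕ} {G : Fin l → Fin (n + 1) → ℤ}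
    (h : ∀ a b, a < b → ∀ k : Fin n, G b k.succ < G a k.castSucc) : ¬ Intersecting G := by
  rintro ⟨k, c, a, b, hab, ha, hb⟩
  rcases hab.lt_or_gt with hab | hba
  · exact (h a b hab k).not_ge (ha.1.trans hb.2)
  · exact (h b a hba k).not_ge (hb.1.trans ha.2)

section Tableaux

variable {lam mu : ℕ → ℕ} {l : ℕ}

theorem mem_skewCells (hlam : Antitone lam) {p : ℕ × ℕ} :
    p ∈ skewCells lam mu l ↔ p.1 < l ∧ mu p.1 ≤ p.2 ∧ p.2 < lam p.1 := by
  simp only [skewCells, mem_filter, mem_product, mem_range]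
  exact ⟨fun h => ⟨h.1.1, h.2⟩, fun h => ⟨⟨h.1, h.2.2.trans_le (hlam (Nat.zero_le _))⟩, h.2⟩⟩

theorem mk_mem_skewCells (hlam : Antitone lam) {i : ℕ} (hi : i < l) {c : ℤ}
    (hc : c ∈ Set.Ico ((mu i : ℤ) - i) ((lam i : ℤ) - i)) :
    (i, (c + i).toNat) ∈ skewCells lam mu l := by
  rw [mem_skewCells hlam]
  have := hc.1
  have := hc.2
  exact ⟨hi, by dsimp only; omega, by dsimp only; omega⟩

theorem content_mem_Ico (hlam : Antitone lam) (p : {p // p ∈ skewCells lam mu l}) :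
    content p ∈ Set.Ico ((mu (p : ℕ × ℕ).1 : ℤ) - (p : ℕ × ℕ).1)
      ((lam (p : ℕ × ℕ).1 : ℤ) - (p : ℕ × ℕ).1) := by
  obtain ⟨⟨i, j⟩, hp⟩ := p
  have := (mem_skewCells hlam).1 hp
  simp only [content, Set.mem_Ico] at this ⊢
  omega

theorem prod_skewCells (hlam : Antitone lam) (F : ℕ → ℤ → R) :
    ∏ p ∈ skewCells lam mu l, F p.1 (content p) =
      ∏ i : Fin l, ∏ c ∈ Ico ((mu i : ℤ) - i) ((lam i : ℤ) - i), F i c := by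
  rw [prod_sigma']
  symm
  refine prod_nbij (fun x => ((x.1 : ℕ), (x.2 + x.1).toNat)) ?_ ?_ ?_ ?_
  · rintro ⟨i, c⟩ hc
    simp only [mem_sigma, mem_univ, true_and, mem_Ico] at hc
    exact mk_mem_skewCells hlam i.2 hc
  · rintro ⟨i, c⟩ hc ⟨i', c'⟩ hc' h
    simp only [coe_sigma, Set.mem_sigma_iff, coe_Ico, Set.mem_Ico, Prod.mk.injEq] at hc hc' h
    obtain rfl : i = i' := Fin.ext h.1
    simp only [Sigma.mk.injEq, heq_eq_eq, true_and]
    omega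
  · intro p hp
    have hp' := (mem_skewCells hlam).1 hp
    refine ⟨⟨⟨p.1, hp'.1⟩, content p⟩, ?_, ?_⟩
    · simp only [coe_sigma, Set.mem_sigma_iff, coe_univ, Set.mem_univ, coe_Ico, Set.mem_Ico,
        content, true_and]
      omega
    · ext <;> simp [content]
  · rintro ⟨i, c⟩ hc
    simp only [mem_sigma, mem_univ, true_and, mem_Ico] at hc
    simp only [content]
    congr 1
    omega

def IsSemistandard {C : Finset (ℕ × ℕ)} (T : {p // p ∈ C} → Fin n) : Prop :=
  (∀ p q : {p // p ∈ C}, (q : ℕ × ℕ).1 = (p : ℕ × ℕ).1 ∧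
      (q : ℕ × ℕ).2 = (p : ℕ × ℕ).2 + 1 → T p ≤ T q) ∧
    (∀ p q : {p // p ∈ C}, (q : ℕ × ℕ).1 = (p : ℕ × ℕ).1 + 1 ∧
      (q : ℕ × ℕ).2 = (p : ℕ × ℕ).2 → T p < T q)

theorem schurGen_eq_sum (C : Finset (ℕ × ℕ)) (X : Fin n → ℤ → R) :
    schurGen n C X =
      ∑ T : {p // p ∈ C} → Fin n with IsSemistandard T, ∏ p, X (T p) (content p) := by
  unfold schurGen IsSemistandard
  convert rfl

/-- Row `i` of `T` as a function of the content of its cells. -/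
def rowLetters (T : {p // p ∈ skewCells lam mu l} → Fin n) (i : ℕ) (c : ℤ) : ℕ :=
  if h : (i, (c + i).toNat) ∈ skewCells lam mu l then T ⟨_, h⟩ else 0

def rowPath (T : {p // p ∈ skewCells lam mu l} → Fin n) (i : ℕ) : Fin (n + 1) → ℤ :=
  pathOfLetters n (rowLetters T i) ((mu i : ℤ) - i) ((lam i : ℤ) - i)

variable {T : {p // p ∈ skewCells lam mu l} → Fin n}

theorem rowLetters_content (p : {p // p ∈ skewCells lam mu l}) :
    rowLetters T (p : ℕ × ℕ).1 (content p) = T p := by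
  have hp : ((p : ℕ × ℕ).1, (content p + (p : ℕ × ℕ).1).toNat) = (p : ℕ × ℕ) := by
    ext <;> simp [content]
  simp [rowLetters, hp]

theorem rowLetters_lt (hlam : Antitone lam) {i : ℕ} (hi : i < l) {c : ℤ}
    (hc : c ∈ Set.Ico ((mu i : ℤ) - i) ((lam i : ℤ) - i)) : rowLetters T i c < n := by
  rw [rowLetters, dif_pos (mk_mem_skewCells hlam hi hc)]
  exact Fin.isLt _

theorem IsSemistandard.monotoneOn_rowLetters (hT : IsSemistandard T) (hlam : Antitone lam)
    {i : ℕ} (hi : i < l) :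
    MonotoneOn (rowLetters T i) (Set.Ico ((mu i : ℤ) - i) ((lam i : ℤ) - i)) := by
  refine monotoneOn_of_le_succ Set.ordConnected_Ico fun c _ hc hc' => ?_
  rw [Order.succ_eq_add_one] at hc' ⊢
  rw [rowLetters, dif_pos (mk_mem_skewCells hlam hi hc), rowLetters,
    dif_pos (mk_mem_skewCells hlam hi hc')]
  exact Fin.le_def.1 (hT.1 _ _ ⟨rfl, by simp only; have := hc.1; omega⟩)

theorem rowPath_mem (hlam : Antitone lam) (hsub : ∀ i, mu i ≤ lam i) {i : ℕ} (hi : i < l) :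
    rowPath T i ∈ latticePaths n ((mu i : ℤ) - i) ((lam i : ℤ) - i) :=
  pathOfLetters_mem_latticePaths (by have := hsub i; omega) fun _ hc => rowLetters_lt hlam hi hc

theorem IsSemistandard.pathLetter_rowPath (hT : IsSemistandard T) (hlam : Antitone lam)
    (hsub : ∀ i, mu i ≤ lam i) {i : ℕ} (hi : i < l) {c : ℤ}
    (hc : c ∈ Set.Ico ((mu i : ℤ) - i) ((lam i : ℤ) - i)) :
    pathLetter (rowPath T i) c = rowLetters T i c :=
  pathLetter_pathOfLetters (by have := hsub i; omega) (hT.monotoneOn_rowLetters hlam hi)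
    (fun _ hc => rowLetters_lt hlam hi hc) hc

/-- Column strictness of `T` is exactly what keeps the paths of consecutive rows apart. -/
theorem IsSemistandard.rowPath_succ_lt (hT : IsSemistandard T) (hlam : Antitone lam)
    (hmu : Antitone mu) (hsub : ∀ i, mu i ≤ lam i) {i : ℕ} (hi : i + 1 < l) (k : Fin n) :
    rowPath T (i + 1) k.succ < rowPath T i k.castSucc := by
  set D := rowPath T i k.castSucc
  have hmu' := hmu (Nat.le_add_right i 1)
  have hlam' := hlam (Nat.le_add_right i 1)
  obtain ⟨hmono, h0, -⟩ := mem_latticePaths.1 (rowPath_mem (T := T) hlam hsub (i := i) (by omega))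
  obtain ⟨hmono', -, hl'⟩ := mem_latticePaths.1 (rowPath_mem (T := T) hlam hsub hi)
  have hD : (mu i : ℤ) - i ≤ D := h0 ▸ hmono (Fin.zero_le _)
  have hD' : rowPath T (i + 1) k.succ ≤ (lam (i + 1) : ℤ) - (i + 1 : ℕ) :=
    hl' ▸ hmono' (Fin.le_last _)
  by_contra! hle
  have hDb : D < (lam i : ℤ) - i := by push_cast at hD' hle; omega
  have hc : D ∈ Set.Ico ((mu i : ℤ) - i) ((lam i : ℤ) - i) := ⟨hD, hDb⟩
  have hc' : D - 1 ∈ Set.Ico ((mu (i + 1) : ℤ) - (i + 1 : ℕ))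
      ((lam (i + 1) : ℤ) - (i + 1 : ℕ)) := by
    push_cast at hD' hle ⊢
    constructor <;> omega
  have hk : (k : ℕ) ≤ rowLetters T i D :=
    not_lt.1 ((lt_pathOfLetters_iff (hT.monotoneOn_rowLetters hlam (by omega)) hc _).not.1
      (lt_irrefl D))
  have hk' : rowLetters T (i + 1) (D - 1) < k + 1 :=
    (lt_pathOfLetters_iff (hT.monotoneOn_rowLetters hlam hi) hc' k.succ).1
      (show D - 1 < rowPath T (i + 1) k.succ by omega)
  have hcol := hT.2 ⟨_, mk_mem_skewCells hlam (by omega) hc⟩ ⟨_, mk_mem_skewCells hlam hi hc'⟩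
    ⟨rfl, by simp only; push_cast; omega⟩
  rw [rowLetters, dif_pos (mk_mem_skewCells hlam (by omega) hc)] at hk
  rw [rowLetters, dif_pos (mk_mem_skewCells hlam hi hc')] at hk'
  exact absurd (Fin.lt_def.1 hcol) (by omega)

theorem IsSemistandard.rowPath_lt (hT : IsSemistandard T) (hlam : Antitone lam)
    (hmu : Antitone mu) (hsub : ∀ i, mu i ≤ lam i) {i j : ℕ} (hij : i < j) (hj : j < l)
    (k : Fin n) : rowPath T j k.succ < rowPath T i k.castSucc := by
  induction j, hij using Nat.le_induction with
  | base => exact hT.rowPath_succ_lt hlam hmu hsub hj k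
  | succ j hij ih =>
    have hmono := (mem_latticePaths.1 (rowPath_mem (T := T) hlam hsub (i := j) (by omega))).1
    exact (hT.rowPath_succ_lt hlam hmu hsub hj k).trans_le
      ((hmono Fin.castSucc_lt_succ.le).trans (ih (by omega)).le)

theorem IsSemistandard.not_intersecting (hT : IsSemistandard T) (hlam : Antitone lam)
    (hmu : Antitone mu) (hsub : ∀ i, mu i ≤ lam i) :
    ¬ Intersecting fun i : Fin l => rowPath T i :=
  not_intersecting_of_succ_lt_castSucc fun _ b hab k => hT.rowPath_lt hlam hmu hsub hab b.2 k

theorem IsSemistandard.prod_eq_prod_pathWeight (hT : IsSemistandard T) (hlam : Antitone lam)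
    (hsub : ∀ i, mu i ≤ lam i) (X : Fin n → ℤ → R) :
    ∏ p, X (T p) (content p) = ∏ i : Fin l, pathWeight X (rowPath T i) := by
  calc ∏ p, X (T p) (content p)
      = ∏ p ∈ skewCells lam mu l, letterWeight X (rowLetters T p.1 (content p)) (content p) := by
        rw [← prod_coe_sort (skewCells lam mu l)]
        exact prod_congr rfl fun p _ => by rw [rowLetters_content, letterWeight_val]
    _ = ∏ i : Fin l, ∏ c ∈ Ico ((mu i : ℤ) - i) ((lam i : ℤ) - i),
          letterWeight X (rowLetters T i c) c :=
        prod_skewCells hlam fun i c => letterWeight X (rowLetters T i c) c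
    _ = ∏ i : Fin l, pathWeight X (rowPath T i) := prod_congr rfl fun i _ => by
        obtain ⟨hmono, h0, hl⟩ := mem_latticePaths.1 (rowPath_mem (T := T) hlam hsub i.2)
        rw [pathWeight_eq_prod_letterWeight X hmono, h0, hl]
        exact prod_congr rfl fun c hc => by
          rw [hT.pathLetter_rowPath hlam hsub i.2 (by simpa using hc)]

theorem strictAnti_sub_val {f : ℕ → ℕ} (hf : Antitone f) :
    StrictAnti fun i : Fin l => (f i : ℤ) - i := fun i j hij => by
  have := hf (Fin.le_def.1 hij.le)
  have : (i : ℕ) < j := hij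
  dsimp only
  omega

variable {G : Fin l → Fin (n + 1) → ℤ}

def tableauOfPaths (hlam : Antitone lam)
    (hG : ∀ i : Fin l, G i ∈ latticePaths n ((mu i : ℤ) - i) ((lam i : ℤ) - i)) :
    {p // p ∈ skewCells lam mu l} → Fin n := fun p =>
  ⟨pathLetter (G ⟨(p : ℕ × ℕ).1, ((mem_skewCells hlam).1 p.2).1⟩) (content p),
    pathLetter_lt_of_mem_latticePaths (hG _) (content_mem_Ico hlam p)⟩

variable (hlam : Antitone lam)
  (hG : ∀ i : Fin l, G i ∈ latticePaths n ((mu i : ℤ) - i) ((lam i : ℤ) - i))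

theorem isSemistandard_tableauOfPaths (hmu : Antitone mu) (hnc : ¬ Intersecting G) :
    IsSemistandard (tableauOfPaths hlam hG) := by
  have hmono i := (mem_latticePaths.1 (hG i)).1
  have h0 : StrictAnti fun i => G i 0 := by
    simpa only [(mem_latticePaths.1 (hG _)).2.1] using strictAnti_sub_val (l := l) hmu
  constructor
  · rintro ⟨⟨i, j⟩, hp⟩ ⟨⟨i', j'⟩, hq⟩ ⟨hi, hj⟩
    simp only at hi hj
    subst hi hj
    exact pathLetter_mono _ (by simp [content])
  · rintro p ⟨⟨i', j'⟩, hq⟩ ⟨hi, hj⟩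
    simp only at hi hj
    subst hi hj
    set a : Fin l := ⟨(p : ℕ × ℕ).1, ((mem_skewCells hlam).1 p.2).1⟩
    set b : Fin l := ⟨(p : ℕ × ℕ).1 + 1, ((mem_skewCells hlam).1 hq).1⟩
    set q : {p // p ∈ skewCells lam mu l} := ⟨_, hq⟩
    have hcq : content q = content p - 1 := by simp [q, content]; ring
    have hp := content_mem_Ico hlam p
    -- With `k` the entry of `p`, path `b` leaves level `k` before path `a` enters it, so the entry
    -- of `q`, one content to the left, exceeds `k`.
    obtain ⟨k, hk⟩ : ∃ k : Fin n, (k : ℕ) = pathLetter (G a) (content p) :=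
      ⟨⟨_, pathLetter_lt_of_mem_latticePaths (hG a) hp⟩, rfl⟩
    have hGa : G a k.castSucc ≤ content p :=
      not_lt.1 ((pathLetter_lt_iff_of_mem_latticePaths (hG a) hp.1 _).not.1 (by simp [hk]))
    have hGb := succ_lt_castSucc_of_not_intersecting hmono hnc h0
      (show a < b from Fin.lt_def.2 (Nat.lt_succ_self _)) k
    have hlt := (pathLetter_lt_iff_of_mem_latticePaths (hG b) (content_mem_Ico hlam q).1
      k.succ).not.2 (by omega)
    show pathLetter (G a) (content p) < pathLetter (G b) (content q)
    rw [Fin.val_succ, not_lt] at hlt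
    omega

theorem rowPath_tableauOfPaths (i : Fin l) : rowPath (tableauOfPaths hlam hG) i = G i := by
  rw [rowPath, ← pathOfLetters_pathLetter (hG i)]
  refine pathOfLetters_congr fun c hc => ?_
  rw [rowLetters, dif_pos (mk_mem_skewCells hlam i.2 hc)]
  simp only [tableauOfPaths, content]
  congr 1
  have := hc.1
  omega

theorem IsSemistandard.tableauOfPaths_rowPath (hT : IsSemistandard T) (hsub : ∀ i, mu i ≤ lam i) :
    tableauOfPaths hlam (fun i => rowPath_mem (T := T) hlam hsub i.2) = T := by
  funext p
  apply Fin.ext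
  rw [← rowLetters_content (T := T) p]
  exact hT.pathLetter_rowPath hlam hsub ((mem_skewCells hlam).1 p.2).1 (content_mem_Ico hlam p)

theorem schurGen_skewCells_eq_sum_nonIntersecting (hlam : Antitone lam) (hmu : Antitone mu)
    (hsub : ∀ i, mu i ≤ lam i) (X : Fin n → ℤ → R) :
    schurGen n (skewCells lam mu l) X =
      ∑ G ∈ Fintype.piFinset (fun i : Fin l => latticePaths n ((mu i : ℤ) - i) ((lam i : ℤ) - i))
        with ¬ Intersecting G, ∏ i, pathWeight X (G i) := by
  have hmem {G : Fin l → Fin (n + 1) → ℤ} :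
      G ∈ {G ∈ Fintype.piFinset (fun i : Fin l => latticePaths n ((mu i : ℤ) - i)
        ((lam i : ℤ) - i)) | ¬ Intersecting G} ↔
      (∀ i : Fin l, G i ∈ latticePaths n ((mu i : ℤ) - i) ((lam i : ℤ) - i)) ∧
        ¬ Intersecting G := by
    simp
  rw [schurGen_eq_sum]
  refine sum_bij' (fun T _ i => rowPath T i) (fun G hG => tableauOfPaths hlam (hmem.1 hG).1)
    (fun T hT => ?_) (fun G hG => ?_) (fun T hT => ?_) (fun G hG => ?_) (fun T hT => ?_)
  · have hT := (mem_filter.1 hT).2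
    exact hmem.2 ⟨fun i => rowPath_mem hlam hsub i.2, hT.not_intersecting hlam hmu hsub⟩
  · exact mem_filter.2 ⟨mem_univ _, isSemistandard_tableauOfPaths hlam _ hmu (hmem.1 hG).2⟩
  · exact (mem_filter.1 hT).2.tableauOfPaths_rowPath hlam hsub
  · exact funext (rowPath_tableauOfPaths hlam (hmem.1 hG).1)
  · exact (mem_filter.1 hT).2.prod_eq_prod_pathWeight hlam hsub X

end Tableaux

/-- `h_r(τ^m X)` is the one-row case of `schurGen_skewCells_eq_sum_nonIntersecting`. -/
theorem hGen_eq_sum_pathWeight (X : Fin n → ℤ → R) (r m : ℤ) :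
    hGen n r m X = ∑ g ∈ latticePaths n m (m + r), pathWeight X g := by
  unfold hGen
  split_ifs with hr
  · refine (sum_eq_zero fun g hg => ?_).symm
    obtain ⟨hmono, h0, hl⟩ := mem_latticePaths.1 hg
    have := hmono (Fin.zero_le (Fin.last n))
    rw [h0, hl] at this
    omega
  have hlam : Antitone fun i : ℕ => if i = 0 then r.toNat else 0 := fun i j hij => by
    dsimp only
    split_ifs <;> omega
  have hrow :
      rowCells r.toNat = skewCells (fun i => if i = 0 then r.toNat else 0) (fun _ => 0) 1 := by
    ext ⟨i, j⟩
    simp only [rowCells, skewCells, mem_image, mem_range, mem_filter, mem_product, Prod.mk.injEq]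
    constructor
    · rintro ⟨j, hj, rfl, rfl⟩
      simp [hj]
    · rintro ⟨⟨hi, -⟩, -, hj⟩
      obtain rfl : i = 0 := by omega
      exact ⟨j, by simpa using hj, rfl, rfl⟩
  rw [hrow, schurGen_skewCells_eq_sum_nonIntersecting hlam antitone_const (fun _ => Nat.zero_le _),
    filter_true_of_mem fun G _ ⟨_, _, a, b, hab, _⟩ => hab (Subsingleton.elim a b),
    ← prod_univ_sum, Fin.prod_univ_one, sum_pathWeight_shift]
  simp only [Fin.val_zero, CharP.cast_eq_zero, sub_zero, add_zero, if_true,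
    Int.toNat_of_nonneg (not_lt.1 hr)]

end

end JacobiTrudi

/-- Parts are 0-indexed, so the shift exponent `μ_j - j + 1` becomes `mu j - j` for `j : Fin l`. -/
theorem jacobiTrudi_ninthVariation_general {R : Type*} [CommRing R] (n l : ℕ) (lam mu : ℕ → ℕ)
    (hlam : Antitone lam) (hmu : Antitone mu) (hsub : ∀ i, mu i ≤ lam i)
    (X : Fin n → ℤ → R) :
    schurGen n (skewCells lam mu l) X =
      Matrix.det (Matrix.of fun i j : Fin l =>
        hGen n ((lam (i : ℕ) : ℤ) - (mu (j : ℕ) : ℤ) - (i : ℕ) + (j : ℕ))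
          ((mu (j : ℕ) : ℤ) - (j : ℕ)) X) := by
  rw [JacobiTrudi.schurGen_skewCells_eq_sum_nonIntersecting hlam hmu hsub,
    ← JacobiTrudi.det_sum_pathWeight_eq_sum_nonIntersecting X (JacobiTrudi.strictAnti_sub_val hmu)
      (JacobiTrudi.strictAnti_sub_val hlam)]
  congr 1
  ext i j
  rw [Matrix.of_apply, Matrix.of_apply, JacobiTrudi.hGen_eq_sum_pathWeight]
  congr 2
  ring

/-- **Jacobi–Trudi type identity for ninth variation skew Schur functions.**
For partitions `μ ⊆ λ` of length at most `l`,
`s_{λ/μ}(X) = det( h_{λ_i - μ_j - i + j}(τ^{μ_j - j + 1} X) )_{1 ≤ i,j ≤ l}`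
(stated with 0-indexed parts, so the shift exponent `μ_j - j + 1` becomes
`mu j - j` for `j : Fin l`). -/
theorem jacobiTrudi_ninthVariation {R : Type*} [CommRing R] (n l : ℕ) (lam mu : ℕ → ℕ)
    (hlam : Antitone lam) (hmu : Antitone mu) (hsub : ∀ i, mu i ≤ lam i)
    (hlen : ∀ i, l ≤ i → lam i = 0) (X : Fin n → ℤ → R) :
    schurGen n (skewCells lam mu l) X =
      Matrix.det (Matrix.of fun i j : Fin l =>
        hGen n ((lam (i : ℕ) : ℤ) - (mu (j : ℕ) : ℤ) - (i : ℕ) + (j : ℕ))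
          ((mu (j : ℕ) : ℤ) - (j : ℕ)) X) :=
  jacobiTrudi_ninthVariation_general n l lam mu hlam hmu hsub X
end

section
/- Let λ and μ be strict partitions with μ ⊆ λ and let SF^{κ/ν} be the image of the shifted skew diagram SF^{λ/μ} under reflection in the anti-diagonal through the box (1, λ_1). Then Q_{λ/μ}(X, Y) = Q_{κ/ν}(Ỹ, X̃), where X̃ = (x_{n−k+1, c}) and Ỹ = (y_{n−k+1, c}). -/
open Finset
open scoped Classical


/-- Boxes of the shifted skew diagram of strict partitions `lam/mu` (0-indexed):
row `i < l` occupies columns `i + mu i ≤ j < i + lam i`. -/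
def shiftedCells (lam mu : ℕ → ℕ) (l : ℕ) : Finset (ℕ × ℕ) :=
  (Finset.range l ×ˢ Finset.range (l + lam 0)).filter fun p =>
    p.1 + mu p.1 ≤ p.2 ∧ p.2 < p.1 + lam p.1

/-- A primed-alphabet entry: `(k, true)` stands for the primed entry `(k+1)'` and
`(k, false)` for the unprimed entry `k+1`.  `ordE` realizes the total order
`1' < 1 < 2' < 2 < ⋯ < n' < n`. -/
def ordE {n : ℕ} (e : Fin n × Bool) : ℕ := 2 * (e.1 : ℕ) + (if e.2 then 0 else 1)

/-- The ninth variation (generalized) skew Q-function: sum over primed shifted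
tableaux on the cell set `C` (entries weakly increasing along rows and columns,
no repeated primed entry in a row, no repeated unprimed entry in a column),
weighting an unprimed entry `k` in a box of content `c` by `X k c` and a primed
entry `k'` by `Y k c`. -/
noncomputable def QGen {R : Type*} [CommRing R] (n : ℕ) (C : Finset (ℕ × ℕ))
    (X Y : Fin n → ℤ → R) : R :=
  ∑ T ∈ Finset.univ.filter (fun T : {p // p ∈ C} → Fin n × Bool =>
      (∀ p q : {p // p ∈ C}, (q : ℕ × ℕ).1 = (p : ℕ × ℕ).1 ∧
          (q : ℕ × ℕ).2 = (p : ℕ × ℕ).2 + 1 →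
          ordE (T p) ≤ ordE (T q) ∧ ¬(T p = T q ∧ (T p).2 = true)) ∧
      (∀ p q : {p // p ∈ C}, (q : ℕ × ℕ).1 = (p : ℕ × ℕ).1 + 1 ∧
          (q : ℕ × ℕ).2 = (p : ℕ × ℕ).2 →
          ordE (T p) ≤ ordE (T q) ∧ ¬(T p = T q ∧ (T p).2 = false))),
    ∏ p : {p // p ∈ C},
      (if (T p).2 then Y (T p).1 (content (p : ℕ × ℕ)) else X (T p).1 (content (p : ℕ × ℕ)))

/-- The Pfaffian of a `2m × 2m` matrix, as the sum over perfect matchings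
(encoded as permutations `σ` in canonical form) of the sign of `σ` times the
product of the matched entries. -/
noncomputable def pfaffian {R : Type*} [CommRing R] {m : ℕ}
    (A : Matrix (Fin (2 * m)) (Fin (2 * m)) R) : R :=
  ∑ σ ∈ Finset.univ.filter (fun σ : Equiv.Perm (Fin (2 * m)) =>
      (∀ i : Fin m, σ ⟨2 * (i : ℕ), by have := i.isLt; omega⟩ <
          σ ⟨2 * (i : ℕ) + 1, by have := i.isLt; omega⟩) ∧
      (∀ i j : Fin m, i < j → σ ⟨2 * (i : ℕ), by have := i.isLt; omega⟩ <
          σ ⟨2 * (j : ℕ), by have := j.isLt; omega⟩)),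
    (Equiv.Perm.sign σ : ℤ) •
      ∏ i : Fin m, A (σ ⟨2 * (i : ℕ), by have := i.isLt; omega⟩)
        (σ ⟨2 * (i : ℕ) + 1, by have := i.isLt; omega⟩)

def flipE {n : ℕ} (e : Fin n × Bool) : Fin n × Bool := (e.1.rev, !e.2)

@[simp] lemma flipE_flipE {n : ℕ} (e : Fin n × Bool) : flipE (flipE e) = e := by
  simp [flipE, Fin.rev_rev]

lemma flipE_inj {n : ℕ} {a b : Fin n × Bool} : flipE a = flipE b ↔ a = b := by
  constructor
  · intro h; have := congrArg flipE h; simpa using this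
  · rintro rfl; rfl

lemma ordE_flipE_le {n : ℕ} {a b : Fin n × Bool} :
    ordE (flipE a) ≤ ordE (flipE b) ↔ ordE b ≤ ordE a := by
  have ha := a.1.isLt; have hb := b.1.isLt
  simp only [ordE, flipE, Fin.val_rev]
  rcases a with ⟨a1, a2⟩; rcases b with ⟨b1, b2⟩
  cases a2 <;> cases b2 <;> simp <;> omega

/-- **Anti-diagonal reflection identity.**  If the shifted skew diagram of the
strict partitions `κ/ν` is the image of that of `λ/μ` under reflection in the
anti-diagonal through the box `(1, λ₁)` (in 0-indexed coordinates,
`(i,j) ↦ (λ₁ - 1 - j, λ₁ - 1 - i)`), then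
`Q_{λ/μ}(X, Y) = Q_{κ/ν}(Ỹ, X̃)` where `X̃ = (x_{n-k+1,c})`, `Ỹ = (y_{n-k+1,c})`. -/
theorem QGen_antidiagonal_reflection {R : Type*} [CommRing R] (n : ℕ)
    (lam mu kap nu : ℕ → ℕ) (l q l' q' : ℕ)
    (hlam : ∀ i j, i < j → j < l → lam j < lam i) (hlampos : ∀ i, i < l → 0 < lam i)
    (hlamlen : ∀ i, l ≤ i → lam i = 0)
    (hmu : ∀ i j, i < j → j < q → mu j < mu i) (hmupos : ∀ i, i < q → 0 < mu i)
    (hmulen : ∀ i, q ≤ i → mu i = 0) (hql : q ≤ l) (hsub : ∀ i, mu i ≤ lam i)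
    (hkap : ∀ i j, i < j → j < l' → kap j < kap i) (hkappos : ∀ i, i < l' → 0 < kap i)
    (hkaplen : ∀ i, l' ≤ i → kap i = 0)
    (hnu : ∀ i j, i < j → j < q' → nu j < nu i) (hnupos : ∀ i, i < q' → 0 < nu i)
    (hnulen : ∀ i, q' ≤ i → nu i = 0) (hql' : q' ≤ l') (hsub' : ∀ i, nu i ≤ kap i)
    (hrefl : shiftedCells kap nu l' =
      (shiftedCells lam mu l).image fun p => (lam 0 - 1 - p.2, lam 0 - 1 - p.1))
    (X Y : Fin n → ℤ → R) :
    QGen n (shiftedCells lam mu l) X Y =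
      QGen n (shiftedCells kap nu l') (fun k c => Y k.rev c) (fun k c => X k.rev c) := by
  
  classical
  set φ : ℕ × ℕ → ℕ × ℕ := fun p => (lam 0 - 1 - p.2, lam 0 - 1 - p.1) with hφ
  set C := shiftedCells lam mu l with hCdef
  set D := shiftedCells kap nu l' with hDdef
  -- bounds for cells of C
  have hbound : ∀ p ∈ C, p.1 + 1 ≤ lam 0 ∧ p.2 + 1 ≤ lam 0 := by
    intro p hp
    rw [hCdef] at hp
    simp only [shiftedCells, Finset.mem_filter, Finset.mem_product, Finset.mem_range] at hp
    obtain ⟨⟨h1, _⟩, h3, h4⟩ := hp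
    have key : ∀ i, i < l → i + lam i ≤ lam 0 := by
      intro i
      induction i with
      | zero => intro _; omega
      | succ k ih =>
        intro hi
        have h5 := hlam k (k + 1) (by omega) hi
        have h6 := ih (by omega)
        omega
    have h7 := key p.1 h1
    have h8 := hlampos p.1 h1
    omega
  have hinv : ∀ p ∈ C, φ (φ p) = p := by
    intro p hp
    obtain ⟨h1, h2⟩ := hbound p hp
    rw [hφ]; dsimp only
    rw [Prod.ext_iff]; dsimp only
    omega
  have hCD : ∀ p ∈ C, φ p ∈ D := by
    intro p hp; rw [hrefl]; exact Finset.mem_image_of_mem _ hp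
  have hDC : ∀ d ∈ D, φ d ∈ C := by
    intro d hd; rw [hrefl] at hd
    obtain ⟨r, hr, rfl⟩ := Finset.mem_image.mp hd
    rw [hinv r hr]; exact hr
  have hinvD : ∀ d ∈ D, φ (φ d) = d := by
    intro d hd; rw [hrefl] at hd
    obtain ⟨r, hr, rfl⟩ := Finset.mem_image.mp hd
    rw [hinv r hr]
  have hboundD : ∀ d ∈ D, d.1 + 1 ≤ lam 0 ∧ d.2 + 1 ≤ lam 0 := by
    intro d hd; rw [hrefl] at hd
    obtain ⟨r, hr, rfl⟩ := Finset.mem_image.mp hd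
    obtain ⟨h1, h2⟩ := hbound r hr
    rw [hφ]; dsimp only; omega
  have hcontent : ∀ p ∈ C, content (φ p) = content p := by
    intro p hp
    obtain ⟨h1, h2⟩ := hbound p hp
    simp only [hφ, content]
    omega
  let e : {p // p ∈ C} ≃ {p // p ∈ D} :=
    { toFun := fun p => ⟨φ p, hCD p p.2⟩
      invFun := fun d => ⟨φ d, hDC d d.2⟩
      left_inv := fun p => Subtype.ext (hinv p p.2)
      right_inv := fun d => Subtype.ext (hinvD d d.2) }
  have he : ∀ p : {x // x ∈ C}, ((e p : {x // x ∈ D}) : ℕ × ℕ) = φ (p : ℕ × ℕ) := fun _ => rfl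
  have hes : ∀ d : {x // x ∈ D}, ((e.symm d : {x // x ∈ C}) : ℕ × ℕ) = φ (d : ℕ × ℕ) :=
    fun _ => rfl
  rw [QGen, QGen]
  refine Finset.sum_nbij' (fun T => flipE ∘ T ∘ e.symm) (fun S => flipE ∘ S ∘ e) ?_ ?_ ?_ ?_ ?_
  · -- membership C → D
    intro T hT
    simp only [Finset.mem_filter, Finset.mem_univ, true_and] at hT ⊢
    obtain ⟨hTrow, hTcol⟩ := hT
    constructor
    · -- row condition on D
      intro p pq hpq
      obtain ⟨h1, h2⟩ := hpq
      obtain ⟨hb1, hb2⟩ := hboundD pq pq.2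
      have hadj : ((e.symm p : {x // x ∈ C}) : ℕ × ℕ).1 =
            ((e.symm pq : {x // x ∈ C}) : ℕ × ℕ).1 + 1 ∧
          ((e.symm p : {x // x ∈ C}) : ℕ × ℕ).2 = ((e.symm pq : {x // x ∈ C}) : ℕ × ℕ).2 := by
        rw [hes, hes, hφ]; dsimp only; omega
      have hc := hTcol (e.symm pq) (e.symm p) ⟨hadj.1, hadj.2⟩
      simp only [Function.comp_apply]
      refine ⟨ordE_flipE_le.mpr hc.1, ?_⟩
      rintro ⟨h3, h4⟩
      rw [flipE_inj] at h3
      have h5 : (T (e.symm p)).2 = false := by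
        simpa [flipE] using h4
      exact hc.2 ⟨h3.symm, by rw [← h3]; exact h5⟩
    · -- column condition on D
      intro p pq hpq
      obtain ⟨h1, h2⟩ := hpq
      obtain ⟨hb1, hb2⟩ := hboundD pq pq.2
      have hadj : ((e.symm p : {x // x ∈ C}) : ℕ × ℕ).1 =
            ((e.symm pq : {x // x ∈ C}) : ℕ × ℕ).1 ∧
          ((e.symm p : {x // x ∈ C}) : ℕ × ℕ).2 = ((e.symm pq : {x // x ∈ C}) : ℕ × ℕ).2 + 1 := by
        rw [hes, hes, hφ]; dsimp only; omega
      have hc := hTrow (e.symm pq) (e.symm p) ⟨hadj.1, hadj.2⟩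
      simp only [Function.comp_apply]
      refine ⟨ordE_flipE_le.mpr hc.1, ?_⟩
      rintro ⟨h3, h4⟩
      rw [flipE_inj] at h3
      have h5 : (T (e.symm p)).2 = true := by
        simpa [flipE] using h4
      exact hc.2 ⟨h3.symm, by rw [← h3]; exact h5⟩
  · -- membership D → C
    intro S hS
    simp only [Finset.mem_filter, Finset.mem_univ, true_and] at hS ⊢
    obtain ⟨hSrow, hScol⟩ := hS
    constructor
    · -- row condition on C
      intro p pq hpq
      obtain ⟨h1, h2⟩ := hpq
      obtain ⟨hb1, hb2⟩ := hbound pq pq.2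
      have hadj : ((e p : {x // x ∈ D}) : ℕ × ℕ).1 =
            ((e pq : {x // x ∈ D}) : ℕ × ℕ).1 + 1 ∧
          ((e p : {x // x ∈ D}) : ℕ × ℕ).2 = ((e pq : {x // x ∈ D}) : ℕ × ℕ).2 := by
        rw [he, he, hφ]; dsimp only; omega
      have hc := hScol (e pq) (e p) ⟨hadj.1, hadj.2⟩
      simp only [Function.comp_apply]
      refine ⟨ordE_flipE_le.mpr hc.1, ?_⟩
      rintro ⟨h3, h4⟩
      rw [flipE_inj] at h3
      have h5 : (S (e p)).2 = false := by
        simpa [flipE] using h4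
      exact hc.2 ⟨h3.symm, by rw [← h3]; exact h5⟩
    · -- column condition on C
      intro p pq hpq
      obtain ⟨h1, h2⟩ := hpq
      obtain ⟨hb1, hb2⟩ := hbound pq pq.2
      have hadj : ((e p : {x // x ∈ D}) : ℕ × ℕ).1 =
            ((e pq : {x // x ∈ D}) : ℕ × ℕ).1 ∧
          ((e p : {x // x ∈ D}) : ℕ × ℕ).2 = ((e pq : {x // x ∈ D}) : ℕ × ℕ).2 + 1 := by
        rw [he, he, hφ]; dsimp only; omega
      have hc := hSrow (e pq) (e p) ⟨hadj.1, hadj.2⟩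
      simp only [Function.comp_apply]
      refine ⟨ordE_flipE_le.mpr hc.1, ?_⟩
      rintro ⟨h3, h4⟩
      rw [flipE_inj] at h3
      have h5 : (S (e p)).2 = true := by
        simpa [flipE] using h4
      exact hc.2 ⟨h3.symm, by rw [← h3]; exact h5⟩
  · -- left inverse
    intro T hT
    funext p
    simp [flipE_flipE, Equiv.symm_apply_apply]
  · -- right inverse
    intro S hS
    funext d
    simp [flipE_flipE, Equiv.apply_symm_apply]
  · -- values
    intro T hT
    refine Fintype.prod_equiv e _ _ fun p => ?_
    simp only [Function.comp_apply, Equiv.symm_apply_apply, he]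
    rw [hcontent (p : ℕ × ℕ) p.2]
    rcases h : T p with ⟨k, b⟩
    cases b <;> simp [flipE, Fin.rev_rev]
end
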